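/- Let G be a connected finite simple graph on n ≥ 4 vertices that is not complete, and let X be a minimum vertex cut of G (so |X| = κ(G)). Then there exists a collection F of pairwise vertex-disjoint copies of K_{1,2} in G such that every vertex of X lies in some member of F and |F| ≤ |X|. -/

import Mathlib

/-- A copy of `K_{1,2}` in `G`: three distinct vertices `a, b, c` with `b`
adjacent to both `a` and `c`. -/
def SimpleGraph.IsK12Copy {V : Type*} [DecidableEq V] (G : SimpleGraph V)
    (s : Finset V) : Prop :=
  ∃ a b c : V, a ≠ b ∧ a ≠ c ∧ b ≠ c ∧ s = {a, b, c} ∧ G.Adj b a ∧ G.Adj b c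

/-- A `K_{1,2}`-structure-cut of `G`: a nonempty collection of pairwise
vertex-disjoint copies of `K_{1,2}` whose removal leaves a graph that is
disconnected or has exactly one vertex. -/
def SimpleGraph.IsK12StructureCut {V : Type*} [DecidableEq V] (G : SimpleGraph V)
    (F : Finset (Finset V)) : Prop :=
  F.Nonempty ∧ (∀ s ∈ F, G.IsK12Copy s) ∧
    (F : Set (Finset V)).Pairwise Disjoint ∧
    (¬ (G.induce {v : V | ∀ s ∈ F, v ∉ s}).Preconnected ∨
      {v : V | ∀ s ∈ F, v ∉ s}.ncard = 1)

/-!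
Let `W` be the complement of `X`. Minimality of `X` gives two facts: every `x ∈ X` has neighbours
in two different components of `G - X` (otherwise `X - x` would still be a cut), and every vertex
has degree at least `#X` (a vertex not adjacent to all others is cut off by its neighbourhood).
These two facts alone let us cover `X` greedily. As long as `X` is nonempty, remove a copy `T` of
`K_{1,2}` meeting `X`: a path inside `X` if there is one; otherwise an edge of `X` together with a
neighbour in `W`; otherwise two vertices of `X` with a common neighbour in `W`; otherwise a vertex
of `X` with two neighbours in `W` that no other vertex of `X` sees. In each case both degree
conditions survive for `X \ T` and `W \ T`, and since every removed copy meets `X`, at most `#X`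
copies are used.
-/

open Finset

theorem Finset.card_filter_sdiff_add_card_filter_inter {α : Type*} [DecidableEq α]
    (s t : Finset α) (p : α → Prop) [DecidablePred p] :
    #{a ∈ s \ t | p a} + #{a ∈ s ∩ t | p a} = #{a ∈ s | p a} := by
  rw [← card_union_of_disjoint (disjoint_filter_filter (disjoint_sdiff_inter s t)),
    ← filter_union, sdiff_union_inter]

namespace SimpleGraph

variable {V : Type*} (G : SimpleGraph V)

section Cover

variable [DecidableEq V]

theorem isK12Copy_of_adj {a b c : V} (hba : G.Adj b a) (hbc : G.Adj b c) (hac : a ≠ c) :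
    G.IsK12Copy {a, b, c} :=
  ⟨a, b, c, (G.ne_of_adj hba).symm, hac, G.ne_of_adj hbc, rfl, hba, hbc⟩

def K12Coverable (X U : Finset V) : Prop :=
  ∃ F : Finset (Finset V), (∀ s ∈ F, G.IsK12Copy s ∧ s ⊆ U) ∧
    (F : Set (Finset V)).Pairwise Disjoint ∧ (∀ x ∈ X, ∃ s ∈ F, x ∈ s) ∧ #F ≤ #X

theorem k12Coverable_empty (U : Finset V) : G.K12Coverable ∅ U :=
  ⟨∅, by simp, by simp, by simp, by simp⟩

variable {G} in
theorem K12Coverable.of_sdiff {X U T : Finset V} (h : G.K12Coverable (X \ T) (U \ T))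
    (hT : G.IsK12Copy T) (hTU : T ⊆ U) (hXT : (X ∩ T).Nonempty) : G.K12Coverable X U := by
  obtain ⟨F, hF, hdisj, hcov, hcard⟩ := h
  have hTF : ∀ s ∈ F, Disjoint T s := fun s hs =>
    disjoint_of_subset_right (hF s hs).2 disjoint_sdiff
  have hlt : #(X \ T) < #X := card_lt_card <| sdiff_lt_left.2 <|
    not_disjoint_iff_nonempty_inter.2 (by rwa [inter_comm])
  refine ⟨insert T F, ?_, ?_, ?_, ?_⟩
  · simp only [mem_insert, forall_eq_or_imp]
    exact ⟨⟨hT, hTU⟩, fun s hs => ⟨(hF s hs).1, (hF s hs).2.trans sdiff_subset⟩⟩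
  · rw [coe_insert]
    exact hdisj.insert fun s hs _ => ⟨hTF s hs, (hTF s hs).symm⟩
  · intro x hx
    by_cases hxT : x ∈ T
    · exact ⟨T, mem_insert_self T F, hxT⟩
    · obtain ⟨s, hs, hxs⟩ := hcov x (mem_sdiff.2 ⟨hx, hxT⟩)
      exact ⟨s, mem_insert_of_mem hs, hxs⟩
  · calc #(insert T F) ≤ #F + 1 := card_insert_le T F
      _ ≤ #X := by omega

variable [DecidableRel G.Adj]

/-- The degree information a minimum vertex cut `X` carries, with `W` its complement: each vertex
of `X` has a neighbour in two different components of `G - X`, and `#X ≤ δ(G)`. -/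
def DegreeCondition (X W : Finset V) : Prop :=
  ∀ x ∈ X, 2 ≤ #{w ∈ W | G.Adj x w} ∧
    #X ≤ #{w ∈ W | G.Adj x w} + #{y ∈ X | G.Adj x y}

def IsK12Reduction (X W T : Finset V) : Prop :=
  G.IsK12Copy T ∧ T ⊆ X ∪ W ∧ (X ∩ T).Nonempty ∧ G.DegreeCondition (X \ T) (W \ T)

variable {G} {X W : Finset V}

theorem DegreeCondition.sdiff (h : G.DegreeCondition X W) (hXW : Disjoint X W) {T : Finset V}
    (hW : ∀ z ∈ X \ T, 2 + #{v ∈ W ∩ T | G.Adj z v} ≤ #{w ∈ W | G.Adj z w})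
    (hT : ∀ z ∈ X \ T, #{v ∈ T | G.Adj z v} ≤ #(X ∩ T)) :
    G.DegreeCondition (X \ T) (W \ T) := by
  intro z hz
  have hsplitW := card_filter_sdiff_add_card_filter_inter W T (G.Adj z)
  have hsplitX := card_filter_sdiff_add_card_filter_inter X T (G.Adj z)
  have hsplitT : #{v ∈ W ∩ T | G.Adj z v} + #{v ∈ X ∩ T | G.Adj z v} ≤
      #{v ∈ T | G.Adj z v} := by
    rw [← card_union_of_disjoint (disjoint_filter_filter
      (hXW.symm.mono inter_subset_left inter_subset_left)), ← filter_union]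
    exact card_le_card (filter_subset_filter _ (union_subset inter_subset_right inter_subset_right))
  have hXT := card_sdiff_add_card_inter X T
  have := h z (mem_sdiff.1 hz).1
  have := hW z hz
  have := hT z hz
  constructor <;> omega

theorem DegreeCondition.sdiff_of_subset (h : G.DegreeCondition X W) (hXW : Disjoint X W)
    {T : Finset V} (hTX : T ⊆ X) : G.DegreeCondition (X \ T) (W \ T) := by
  have hWT : W ∩ T = ∅ := disjoint_iff_inter_eq_empty.1 (hXW.symm.mono_right hTX)
  refine h.sdiff hXW (fun z hz => ?_) (fun z _ => ?_)
  · simpa [hWT] using (h z (mem_sdiff.1 hz).1).1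
  · rw [inter_eq_right.2 hTX]
    exact card_filter_le T _

theorem DegreeCondition.sdiff_pair (h : G.DegreeCondition X W) (hXW : Disjoint X W)
    (hP : ∀ z ∈ X, #{v ∈ X | G.Adj z v} ≤ 1) {x y w : V} (hx : x ∈ X) (hy : y ∈ X)
    (hxy : x ≠ y) (hadj : ∀ z ∈ X \ {x, w, y}, ¬ G.Adj z x ∧ ¬ G.Adj z y) :
    G.DegreeCondition (X \ {x, w, y}) (W \ {x, w, y}) := by
  have hT : ∀ z ∈ X \ {x, w, y}, #{v ∈ {x, w, y} | G.Adj z v} ≤ 1 := by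
    intro z hz
    refine card_le_one.2 fun u hu v hv => ?_
    simp only [mem_filter, mem_insert, mem_singleton] at hu hv
    have := hadj z hz
    grind
  refine h.sdiff hXW (fun z hz => ?_) (fun z hz => ?_)
  · obtain ⟨hzX, hzT⟩ := mem_sdiff.1 hz
    simp only [mem_insert, mem_singleton, not_or] at hzT
    have hXz : #{v ∈ X | G.Adj z v} + 3 ≤ #X := by
      have hsub : {v ∈ X | G.Adj z v} ⊆ X \ {x, y, z} := by
        intro v hv
        rw [mem_filter] at hv
        have := hadj z hz
        have := G.ne_of_adj hv.2
        simp only [mem_sdiff, mem_insert, mem_singleton]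
        grind
      have hxyz : #({x, y, z} : Finset V) = 3 :=
        card_eq_three.2 ⟨x, y, z, hxy, by grind, by grind, rfl⟩
      have := card_le_card hsub
      rw [card_sdiff_of_subset (by simp [insert_subset_iff, hx, hy, hzX])] at this
      have := card_le_card (show {x, y, z} ⊆ X by simp [insert_subset_iff, hx, hy, hzX])
      omega
    have := card_le_card (filter_subset_filter (fun v => G.Adj z v)
      (inter_subset_right : W ∩ {x, w, y} ⊆ _))
    have := hT z hz
    have := h z hzX
    have := hP z hzX
    omega
  · have := card_le_card (show {x, y} ⊆ X ∩ {x, w, y} by simp [insert_subset_iff, hx, hy])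
    rw [card_pair hxy] at this
    have := hT z hz
    omega

theorem DegreeCondition.exists_reduction_of_path (h : G.DegreeCondition X W)
    (hXW : Disjoint X W) {b : V} (hb : b ∈ X) (hb2 : 1 < #{y ∈ X | G.Adj b y}) :
    ∃ T, G.IsK12Reduction X W T := by
  obtain ⟨a, ha, c, hc, hac⟩ := one_lt_card.1 hb2
  rw [mem_filter] at ha hc
  have hT : {a, b, c} ⊆ X := by simp [insert_subset_iff, ha.1, hb, hc.1]
  exact ⟨{a, b, c}, G.isK12Copy_of_adj ha.2 hc.2 hac, hT.trans subset_union_left,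
    ⟨b, by simp [hb]⟩, h.sdiff_of_subset hXW hT⟩

theorem DegreeCondition.exists_reduction_of_edge (h : G.DegreeCondition X W)
    (hXW : Disjoint X W) (hP : ∀ z ∈ X, #{v ∈ X | G.Adj z v} ≤ 1) {x y : V} (hx : x ∈ X)
    (hy : y ∈ X) (hxy : G.Adj x y) : ∃ T, G.IsK12Reduction X W T := by
  obtain ⟨w, hw⟩ : {v ∈ W | G.Adj x v}.Nonempty :=
    card_pos.1 (by have := (h x hx).1; omega)
  rw [mem_filter] at hw
  have hyw : y ≠ w := fun hyw => Finset.disjoint_left.1 hXW hy (hyw ▸ hw.1)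
  have hadj : ∀ z ∈ X \ {x, w, y}, ¬ G.Adj z x ∧ ¬ G.Adj z y := by
    intro z hz
    obtain ⟨hzX, hzT⟩ := mem_sdiff.1 hz
    simp only [mem_insert, mem_singleton, not_or] at hzT
    refine ⟨fun hzx => hzT.2.2 ?_, fun hzy => hzT.1 ?_⟩
    · exact card_le_one.1 (hP x hx) z (by simp [hzX, hzx.symm]) y (by simp [hy, hxy])
    · exact card_le_one.1 (hP y hy) z (by simp [hzX, hzy.symm]) x (by simp [hx, hxy.symm])
  refine ⟨{w, x, y}, G.isK12Copy_of_adj hw.2 hxy hyw.symm,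
    by simp [insert_subset_iff, hw.1, hx, hy], ⟨x, by simp [hx]⟩, ?_⟩
  rw [insert_comm]
  exact h.sdiff_pair hXW hP hx hy (G.ne_of_adj hxy) hadj

theorem DegreeCondition.exists_reduction_of_common_neighbor (h : G.DegreeCondition X W)
    (hXW : Disjoint X W) (hE : ∀ x ∈ X, ∀ y ∈ X, ¬ G.Adj x y) {x y w : V} (hx : x ∈ X)
    (hy : y ∈ X) (hw : w ∈ W) (hxy : x ≠ y) (hwx : G.Adj w x) (hwy : G.Adj w y) :
    ∃ T, G.IsK12Reduction X W T := by
  have hP : ∀ z ∈ X, #{v ∈ X | G.Adj z v} ≤ 1 := fun z hz => by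
    simp [filter_false_of_mem fun v hv => hE z hz v hv]
  exact ⟨{x, w, y}, G.isK12Copy_of_adj hwx hwy hxy, by simp [insert_subset_iff, hx, hy, hw],
    ⟨x, by simp [hx]⟩, h.sdiff_pair hXW hP hx hy hxy fun z hz =>
      ⟨hE z (mem_sdiff.1 hz).1 x hx, hE z (mem_sdiff.1 hz).1 y hy⟩⟩

theorem DegreeCondition.exists_reduction_of_private_neighbors (h : G.DegreeCondition X W)
    (hXW : Disjoint X W) (hE : ∀ x ∈ X, ∀ y ∈ X, ¬ G.Adj x y)
    (hC : ∀ w ∈ W, ∀ x ∈ X, ∀ y ∈ X, x ≠ y → G.Adj x w → ¬ G.Adj y w)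
    (hX : X.Nonempty) : ∃ T, G.IsK12Reduction X W T := by
  obtain ⟨x, hx⟩ := hX
  obtain ⟨a, ha, b, hb, hab⟩ := one_lt_card.1 (h x hx).1
  rw [mem_filter] at ha hb
  have hadj : ∀ z ∈ X \ {a, x, b}, ({v ∈ {a, x, b} | G.Adj z v} : Finset V) = ∅ := by
    intro z hz
    obtain ⟨hzX, hzT⟩ := mem_sdiff.1 hz
    simp only [mem_insert, mem_singleton, not_or] at hzT
    refine filter_eq_empty_iff.2 fun v hv => ?_
    simp only [mem_insert, mem_singleton] at hv
    rcases hv with rfl | rfl | rfl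
    · exact hC v ha.1 x hx z hzX (Ne.symm hzT.2.1) ha.2
    · exact hE z hzX v hx
    · exact hC v hb.1 x hx z hzX (Ne.symm hzT.2.1) hb.2
  refine ⟨{a, x, b}, G.isK12Copy_of_adj ha.2 hb.2 hab,
    by simp [insert_subset_iff, ha.1, hx, hb.1], ⟨x, by simp [hx]⟩,
    h.sdiff hXW (fun z hz => ?_) (fun z hz => by simp [hadj z hz])⟩
  have := card_le_card (filter_subset_filter (fun v => G.Adj z v)
    (inter_subset_right : W ∩ {a, x, b} ⊆ _))
  rw [hadj z hz, card_empty] at this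
  have := (h z (mem_sdiff.1 hz).1).1
  omega

theorem DegreeCondition.exists_reduction (h : G.DegreeCondition X W) (hXW : Disjoint X W)
    (hX : X.Nonempty) : ∃ T, G.IsK12Reduction X W T := by
  by_cases hP : ∃ b ∈ X, 1 < #{y ∈ X | G.Adj b y}
  · obtain ⟨b, hb, hb2⟩ := hP
    exact h.exists_reduction_of_path hXW hb hb2
  push Not at hP
  by_cases hE : ∃ x ∈ X, ∃ y ∈ X, G.Adj x y
  · obtain ⟨x, hx, y, hy, hxy⟩ := hE
    exact h.exists_reduction_of_edge hXW hP hx hy hxy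
  push Not at hE
  by_cases hC : ∃ w ∈ W, ∃ x ∈ X, ∃ y ∈ X, x ≠ y ∧ G.Adj x w ∧ G.Adj y w
  · obtain ⟨w, hw, x, hx, y, hy, hxy, hxw, hyw⟩ := hC
    exact h.exists_reduction_of_common_neighbor hXW hE hx hy hw hxy hxw.symm hyw.symm
  push Not at hC
  exact h.exists_reduction_of_private_neighbors hXW hE hC hX

theorem DegreeCondition.k12Coverable (h : G.DegreeCondition X W) (hXW : Disjoint X W) :
    G.K12Coverable X (X ∪ W) := by
  induction X using Finset.strongInduction generalizing W with
  | H X ih =>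
  obtain rfl | hX := X.eq_empty_or_nonempty
  · exact G.k12Coverable_empty _
  obtain ⟨T, hT, hTU, hXT, hT'⟩ := h.exists_reduction hXW hX
  refine K12Coverable.of_sdiff ?_ hT hTU hXT
  rw [union_sdiff_distrib]
  exact ih _ (sdiff_lt_left.2 (not_disjoint_iff_nonempty_inter.2 (by rwa [inter_comm])))
    hT' (hXW.mono sdiff_subset sdiff_subset)

end Cover

theorem not_preconnected_induce_iff {S : Set V} :
    ¬ (G.induce S).Preconnected ↔ ∃ A B : Set V, A ∪ B = S ∧ Disjoint A B ∧
      A.Nonempty ∧ B.Nonempty ∧ ∀ a ∈ A, ∀ b ∈ B, ¬ G.Adj a b := by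
  constructor
  · intro h
    simp only [Preconnected, not_forall] at h
    obtain ⟨u, v, huv⟩ := h
    let A : Set V := {w | ∃ hw : w ∈ S, (G.induce S).Reachable u ⟨w, hw⟩}
    refine ⟨A, S \ A, Set.union_sdiff_cancel fun w ⟨hw, _⟩ => hw, Set.disjoint_sdiff_right,
      ⟨u, u.2, .rfl⟩, ⟨v, v.2, fun ⟨_, hv⟩ => huv hv⟩, ?_⟩
    rintro a ⟨ha, hua⟩ b ⟨hb, hnb⟩ hab
    exact hnb ⟨hb, hua.trans (Adj.reachable (by simpa using hab))⟩
  · rintro ⟨A, B, rfl, hdisj, ⟨a, ha⟩, ⟨b, hb⟩, hsep⟩ h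
    obtain ⟨p⟩ := h ⟨a, Or.inl ha⟩ ⟨b, Or.inr hb⟩
    obtain ⟨d, -, hd₁, hd₂⟩ :=
      p.exists_boundary_dart {w | w.1 ∈ A} ha (Set.disjoint_right.1 hdisj hb)
    exact hsep _ hd₁ _ (d.snd.2.resolve_left hd₂) (by simpa using d.adj)

section MinimalCut

variable [DecidableEq V] {X : Finset V}

theorem exists_adj_of_minimal_cut
    (hmin : ∀ Y : Finset V, ¬ (G.induce (↑Y : Set V)ᶜ).Preconnected → #X ≤ #Y)
    {A B : Set V} (hAB : A ∪ B = (↑X)ᶜ) (hdisj : Disjoint A B) (hA : A.Nonempty)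
    (hB : B.Nonempty) (hsep : ∀ a ∈ A, ∀ b ∈ B, ¬ G.Adj a b) {x : V} (hx : x ∈ X) :
    ∃ a ∈ A, G.Adj x a := by
  by_contra! hxA
  have hxA' : x ∉ A := fun h => (hAB ▸ Or.inl h : x ∈ (↑X : Set V)ᶜ) hx
  have hcut : ¬ (G.induce (↑(X.erase x) : Set V)ᶜ).Preconnected := by
    refine G.not_preconnected_induce_iff.2
      ⟨A, B ∪ {x}, ?_, ?_, hA, hB.mono Set.subset_union_left, ?_⟩
    · rw [← Set.union_assoc, hAB]
      ext v
      by_cases hv : v = x <;> simp [hv, hx]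
    · exact Set.disjoint_union_right.2 ⟨hdisj, Set.disjoint_singleton_right.2 hxA'⟩
    · rintro a ha b (hb | rfl)
      · exact hsep a ha b hb
      · exact fun h => hxA a ha h.symm
  have := hmin _ hcut
  rw [card_erase_of_mem hx] at this
  have := card_pos.2 ⟨x, hx⟩
  omega

theorem card_le_degree_of_minimal_cut [Fintype V] [DecidableRel G.Adj]
    (hmin : ∀ Y : Finset V, ¬ (G.induce (↑Y : Set V)ᶜ).Preconnected → #X ≤ #Y)
    (hX : #X < Fintype.card V) (v : V) : #X ≤ G.degree v := by
  rw [← card_neighborFinset_eq_degree]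
  by_cases hfull : ∀ w, w ≠ v → G.Adj v w
  · have : G.neighborFinset v = univ.erase v := by
      ext w
      simpa using ⟨fun h => (G.ne_of_adj h).symm, hfull w⟩
    rw [this, card_erase_of_mem (mem_univ v), card_univ]
    omega
  · push Not at hfull
    obtain ⟨w, hwv, hvw⟩ := hfull
    refine hmin _ (G.not_preconnected_induce_iff.2
      ⟨{v}, (↑(G.neighborFinset v))ᶜ \ {v}, Set.union_sdiff_cancel (by simp),
        Set.disjoint_sdiff_right, Set.singleton_nonempty v, ⟨w, by simpa using hvw, hwv⟩, ?_⟩)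
    rintro a rfl b ⟨hb, -⟩ hab
    exact hb (by simpa using hab)

theorem degreeCondition_of_minimal_cut [Fintype V] [DecidableRel G.Adj]
    (hcut : ¬ (G.induce (↑X : Set V)ᶜ).Preconnected)
    (hmin : ∀ Y : Finset V, ¬ (G.induce (↑Y : Set V)ᶜ).Preconnected → #X ≤ #Y) :
    G.DegreeCondition X Xᶜ := by
  obtain ⟨A, B, hAB, hdisj, hA, hB, hsep⟩ := G.not_preconnected_induce_iff.1 hcut
  have hcompl : ∀ v ∈ A ∪ B, v ∈ Xᶜ := fun v hv => by
    simpa using (hAB ▸ hv : v ∈ (↑X : Set V)ᶜ)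
  intro x hx
  obtain ⟨a, ha, hxa⟩ := G.exists_adj_of_minimal_cut hmin hAB hdisj hA hB hsep hx
  obtain ⟨b, hb, hxb⟩ := G.exists_adj_of_minimal_cut hmin ((Set.union_comm B A).trans hAB)
    hdisj.symm hB hA (fun b hb a ha hba => hsep a ha b hb hba.symm) hx
  refine ⟨one_lt_card.2 ⟨a, mem_filter.2 ⟨hcompl a (Or.inl ha), hxa⟩,
    b, mem_filter.2 ⟨hcompl b (Or.inr hb), hxb⟩,
    fun hab => Set.disjoint_left.1 hdisj ha (hab ▸ hb)⟩, ?_⟩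
  have hXV : #X < Fintype.card V := card_lt_univ_of_notMem (mem_compl.1 (hcompl a (Or.inl ha)))
  have hsplit := card_filter_sdiff_add_card_filter_inter univ X (G.Adj x)
  rw [← compl_eq_univ_sdiff, univ_inter, ← neighborFinset_eq_filter,
    card_neighborFinset_eq_degree] at hsplit
  have := G.card_le_degree_of_minimal_cut hmin hXV x
  omega

end MinimalCut

end SimpleGraph

theorem minimum_vertex_cut_has_disjoint_K12_covering_general {V : Type*} [Fintype V] [DecidableEq V]
    (G : SimpleGraph V) (X : Finset V)
    (hcut : ¬ (G.induce (↑X : Set V)ᶜ).Preconnected)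
    (hmin : ∀ Y : Finset V, ¬ (G.induce (↑Y : Set V)ᶜ).Preconnected → X.card ≤ Y.card) :
    ∃ F : Finset (Finset V), (∀ s ∈ F, G.IsK12Copy s) ∧
      (F : Set (Finset V)).Pairwise Disjoint ∧
      (∀ x ∈ X, ∃ s ∈ F, x ∈ s) ∧ F.card ≤ X.card := by
  classical
  obtain ⟨F, hF, hdisj, hcov, hcard⟩ :=
    (G.degreeCondition_of_minimal_cut hcut hmin).k12Coverable disjoint_compl_right
  exact ⟨F, fun s hs => (hF s hs).1, hdisj, hcov, hcard⟩

theorem minimum_vertex_cut_has_disjoint_K12_covering {V : Type*} [Fintype V] [DecidableEq V]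
    (G : SimpleGraph V) (hconn : G.Connected) (hn : 4 ≤ Fintype.card V)
    (hnc : G ≠ ⊤) (X : Finset V)
    (hcut : ¬ (G.induce (↑X : Set V)ᶜ).Preconnected)
    (hmin : ∀ Y : Finset V, ¬ (G.induce (↑Y : Set V)ᶜ).Preconnected → X.card ≤ Y.card) :
    ∃ F : Finset (Finset V), (∀ s ∈ F, G.IsK12Copy s) ∧
      (F : Set (Finset V)).Pairwise Disjoint ∧
      (∀ x ∈ X, ∃ s ∈ F, x ∈ s) ∧ F.card ≤ X.card :=
  minimum_vertex_cut_has_disjoint_K12_covering_general G X hcut hmin
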